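/- arXiv:1801.02090 — 3 statements merged into one kernel-verified Lean document; each statement's English description precedes it below -/
import Mathlib

section
/- Let L be a real continuous symmetric function on a metric space X satisfying the negative definite kernel inequality. Then for all probability measures μ, ν for which the double integrals exist, 2∫∫ L dμ dν − ∫∫ L dμ dμ − ∫∫ L dν dν ≥ 0. -/
/-!
Centre `L` at a point `x₀`: `φ x y = L x x₀ + L x₀ y - L x y - L x₀ x₀`. Adding `x₀` with weight
`-∑ cᵢ` to a configuration shows that `φ` is positive semidefinite (Schoenberg), and the quantity
in the theorem is `∫∫ φ d(μ - ν) d(μ - ν)`, i.e. `∫∫ K dρ dρ` for `ρ = μ ⊗ ν` and the kernel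
`K (x, y) (x', y') = φ x x' + φ y y' - φ x y' - φ y x'` on `X × X`.

A positive semidefinite kernel has nonnegative energy `E = ∫∫ K dρ dρ`: integrating
`∑ᵢⱼ K zᵢ zⱼ ≥ 0` against `ρ^⊗2ⁿ` gives `(2ⁿ - 1) E + ∫ K z z dρ ≥ 0` (the product is built by
doubling `Z ↦ Z × Z` `n` times), and `n → ∞` gives `E ≥ 0`. This needs an integrable diagonal, so
`φ` is first restricted to `{φ x x ≤ M}²`, which keeps it positive semidefinite, and `M → ∞`.
-/

open MeasureTheory Function Filter Topology
open scoped ComplexOrder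

section

variable {Z : Type*}

def IsPosSemidefKernel (K : Z → Z → ℝ) : Prop :=
  ∀ (n : ℕ) (c : Fin n → ℝ) (x : Fin n → Z), 0 ≤ ∑ i, ∑ j, c i * c j * K (x i) (x j)

def IsCondNegSemidefKernel (L : Z → Z → ℝ) : Prop :=
  ∀ (n : ℕ) (c : Fin n → ℝ) (x : Fin n → Z), ∑ i, c i = 0 →
    ∑ i, ∑ j, c i * c j * L (x i) (x j) ≤ 0

def centeredKernel (L : Z → Z → ℝ) (x₀ x y : Z) : ℝ :=
  L x x₀ + L x₀ y - L x y - L x₀ x₀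

/-- The form of `K` evaluated at the signed point masses `δ u.1 + s δ u.2`, `δ v.1 + s δ v.2`. -/
def pairKernel (s : ℝ) (K : Z → Z → ℝ) (u v : Z × Z) : ℝ :=
  K u.1 v.1 + s * K u.1 v.2 + s * K u.2 v.1 + s ^ 2 * K u.2 v.2

theorem isCondNegSemidefKernel_of_complex {L : Z → Z → ℝ}
    (hneg : ∀ (n : ℕ) (c : Fin n → ℂ) (x : Fin n → Z), (∑ i, c i) = 0 →
      ∑ i, ∑ j, (L (x i) (x j) : ℂ) * c i * (starRingEnd ℂ) (c j) ≤ 0) :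
    IsCondNegSemidefKernel L := by
  intro n c x hc
  have h := hneg n (fun i => c i) x (by exact_mod_cast hc)
  simp only [Complex.conj_ofReal] at h
  have hcast : ((∑ i, ∑ j, c i * c j * L (x i) (x j) : ℝ) : ℂ) ≤ 0 := by
    push_cast
    simpa only [mul_comm, mul_left_comm] using h
  exact_mod_cast hcast

theorem IsCondNegSemidefKernel.isPosSemidefKernel_centeredKernel {L : Z → Z → ℝ}
    (hL : IsCondNegSemidefKernel L) (x₀ : Z) : IsPosSemidefKernel (centeredKernel L x₀) := by
  intro n c x
  have h := hL (n + 1) (Fin.cons (-∑ i, c i) c) (Fin.cons x₀ x) (by simp [Fin.sum_univ_succ])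
  simp only [Fin.sum_univ_succ, Fin.cons_zero, Fin.cons_succ] at h
  simp only [centeredKernel, mul_add, mul_sub, Finset.sum_add_distrib, Finset.sum_sub_distrib,
    mul_assoc, neg_mul, mul_neg, Finset.sum_neg_distrib, ← Finset.sum_mul, ← Finset.mul_sum]
    at h ⊢
  linarith

namespace IsPosSemidefKernel

variable {K : Z → Z → ℝ}

theorem diag_nonneg (hK : IsPosSemidefKernel K) (z : Z) : 0 ≤ K z z := by
  simpa using hK 1 1 fun _ => z

protected theorem pairKernel (hK : IsPosSemidefKernel K) (s : ℝ) :
    IsPosSemidefKernel (pairKernel s K) := by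
  intro n c u
  convert hK (n + n) (Fin.append c (s • c)) (Fin.append (fun i => (u i).1) fun i => (u i).2)
    using 1
  simp only [Fin.sum_univ_add, Fin.append_left, Fin.append_right, Pi.smul_apply, smul_eq_mul,
    ← Finset.sum_add_distrib]
  refine Finset.sum_congr rfl fun i _ => Finset.sum_congr rfl fun j _ => ?_
  simp only [pairKernel]
  ring

theorem indicator_prod (hK : IsPosSemidefKernel K) (s : Set Z) :
    IsPosSemidefKernel fun x y => (s ×ˢ s).indicator (uncurry K) (x, y) := by
  intro n c x
  convert hK n (fun i => c i * s.indicator 1 (x i)) x using 1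
  refine Finset.sum_congr rfl fun i _ => Finset.sum_congr rfl fun j _ => ?_
  by_cases hi : x i ∈ s <;> by_cases hj : x j ∈ s <;> simp [hi, hj]

end IsPosSemidefKernel

theorem MeasureTheory.MeasurePreserving.integral_comp_of_aestronglyMeasurable
    {α β E : Type*} [MeasurableSpace α] [MeasurableSpace β] [NormedAddCommGroup E]
    [NormedSpace ℝ E] {μ : Measure α} {ν : Measure β} {f : α → β}
    (hf : MeasurePreserving f μ ν) {g : β → E} (hg : AEStronglyMeasurable g ν) :
    ∫ x, g (f x) ∂μ = ∫ y, g y ∂ν := by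
  rw [← hf.map_eq] at hg ⊢
  exact (integral_map hf.measurable.aemeasurable hg).symm

section Integrals

variable [MeasurableSpace Z] {ρ₁ ρ₂ : Measure Z} [IsProbabilityMeasure ρ₁]
  [IsProbabilityMeasure ρ₂] {K : Z → Z → ℝ}

theorem integrable_pairKernel (s : ℝ) (h₁₁ : Integrable (uncurry K) (ρ₁.prod ρ₁))
    (h₁₂ : Integrable (uncurry K) (ρ₁.prod ρ₂)) (h₂₁ : Integrable (uncurry K) (ρ₂.prod ρ₁))
    (h₂₂ : Integrable (uncurry K) (ρ₂.prod ρ₂)) :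
    Integrable (uncurry (pairKernel s K)) ((ρ₁.prod ρ₂).prod (ρ₁.prod ρ₂)) := by
  have m₁ : MeasurePreserving Prod.fst (ρ₁.prod ρ₂) ρ₁ := measurePreserving_fst
  have m₂ : MeasurePreserving Prod.snd (ρ₁.prod ρ₂) ρ₂ := measurePreserving_snd
  have t₁₁ : Integrable (fun q : (Z × Z) × (Z × Z) => K q.1.1 q.2.1) _ :=
    (m₁.prod m₁).integrable_comp_of_integrable h₁₁
  have t₁₂ : Integrable (fun q : (Z × Z) × (Z × Z) => K q.1.1 q.2.2) _ :=
    (m₁.prod m₂).integrable_comp_of_integrable h₁₂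
  have t₂₁ : Integrable (fun q : (Z × Z) × (Z × Z) => K q.1.2 q.2.1) _ :=
    (m₂.prod m₁).integrable_comp_of_integrable h₂₁
  have t₂₂ : Integrable (fun q : (Z × Z) × (Z × Z) => K q.1.2 q.2.2) _ :=
    (m₂.prod m₂).integrable_comp_of_integrable h₂₂
  exact ((t₁₁.add (t₁₂.const_mul s)).add (t₂₁.const_mul s)).add (t₂₂.const_mul (s ^ 2))

theorem integral_pairKernel (s : ℝ) (h₁₁ : Integrable (uncurry K) (ρ₁.prod ρ₁))
    (h₁₂ : Integrable (uncurry K) (ρ₁.prod ρ₂)) (h₂₁ : Integrable (uncurry K) (ρ₂.prod ρ₁))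
    (h₂₂ : Integrable (uncurry K) (ρ₂.prod ρ₂)) :
    ∫ q, uncurry (pairKernel s K) q ∂(ρ₁.prod ρ₂).prod (ρ₁.prod ρ₂) =
      ∫ p, uncurry K p ∂ρ₁.prod ρ₁ + s * ∫ p, uncurry K p ∂ρ₁.prod ρ₂ +
        s * ∫ p, uncurry K p ∂ρ₂.prod ρ₁ + s ^ 2 * ∫ p, uncurry K p ∂ρ₂.prod ρ₂ := by
  have m₁ : MeasurePreserving Prod.fst (ρ₁.prod ρ₂) ρ₁ := measurePreserving_fst
  have m₂ : MeasurePreserving Prod.snd (ρ₁.prod ρ₂) ρ₂ := measurePreserving_snd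
  have t₁₁ : Integrable (fun q : (Z × Z) × (Z × Z) => K q.1.1 q.2.1) _ :=
    (m₁.prod m₁).integrable_comp_of_integrable h₁₁
  have t₁₂ : Integrable (fun q : (Z × Z) × (Z × Z) => s * K q.1.1 q.2.2) _ :=
    ((m₁.prod m₂).integrable_comp_of_integrable h₁₂).const_mul s
  have t₂₁ : Integrable (fun q : (Z × Z) × (Z × Z) => s * K q.1.2 q.2.1) _ :=
    ((m₂.prod m₁).integrable_comp_of_integrable h₂₁).const_mul s
  have t₂₂ : Integrable (fun q : (Z × Z) × (Z × Z) => s ^ 2 * K q.1.2 q.2.2) _ :=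
    ((m₂.prod m₂).integrable_comp_of_integrable h₂₂).const_mul (s ^ 2)
  have e₁₁ : ∫ q, K q.1.1 q.2.1 ∂(ρ₁.prod ρ₂).prod (ρ₁.prod ρ₂) = _ :=
    (m₁.prod m₁).integral_comp_of_aestronglyMeasurable h₁₁.1
  have e₁₂ : ∫ q, K q.1.1 q.2.2 ∂(ρ₁.prod ρ₂).prod (ρ₁.prod ρ₂) = _ :=
    (m₁.prod m₂).integral_comp_of_aestronglyMeasurable h₁₂.1
  have e₂₁ : ∫ q, K q.1.2 q.2.1 ∂(ρ₁.prod ρ₂).prod (ρ₁.prod ρ₂) = _ :=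
    (m₂.prod m₁).integral_comp_of_aestronglyMeasurable h₂₁.1
  have e₂₂ : ∫ q, K q.1.2 q.2.2 ∂(ρ₁.prod ρ₂).prod (ρ₁.prod ρ₂) = _ :=
    (m₂.prod m₂).integral_comp_of_aestronglyMeasurable h₂₂.1
  simp only [uncurry_def, pairKernel]
  rw [integral_add ?_ t₂₂, integral_add ?_ t₂₁, integral_add t₁₁ t₁₂, integral_const_mul,
    integral_const_mul, integral_const_mul, e₁₁, e₁₂, e₂₁, e₂₂]
  exacts [rfl, t₁₁.add t₁₂, (t₁₁.add t₁₂).add t₂₁]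

theorem integrable_pairKernel_diag (s : ℝ) (hd₁ : Integrable (fun z => K z z) ρ₁)
    (hd₂ : Integrable (fun z => K z z) ρ₂) (h₁₂ : Integrable (uncurry K) (ρ₁.prod ρ₂))
    (h₂₁ : Integrable (uncurry K) (ρ₂.prod ρ₁)) :
    Integrable (fun u => pairKernel s K u u) (ρ₁.prod ρ₂) := by
  have t₁ : Integrable (fun u : Z × Z => K u.1 u.1) _ :=
    (measurePreserving_fst (ν := ρ₂)).integrable_comp_of_integrable hd₁
  have t₂ : Integrable (fun u : Z × Z => K u.2 u.2) _ :=
    (measurePreserving_snd (μ := ρ₁)).integrable_comp_of_integrable hd₂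
  exact ((t₁.add (h₁₂.const_mul s)).add (h₂₁.swap.const_mul s)).add (t₂.const_mul (s ^ 2))

theorem integral_pairKernel_diag (s : ℝ) (hd₁ : Integrable (fun z => K z z) ρ₁)
    (hd₂ : Integrable (fun z => K z z) ρ₂) (h₁₂ : Integrable (uncurry K) (ρ₁.prod ρ₂))
    (h₂₁ : Integrable (uncurry K) (ρ₂.prod ρ₁)) :
    ∫ u, pairKernel s K u u ∂ρ₁.prod ρ₂ =
      ∫ z, K z z ∂ρ₁ + s * ∫ p, uncurry K p ∂ρ₁.prod ρ₂ +
        s * ∫ p, uncurry K p ∂ρ₂.prod ρ₁ + s ^ 2 * ∫ z, K z z ∂ρ₂ := by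
  have m₁ := measurePreserving_fst (μ := ρ₁) (ν := ρ₂)
  have m₂ := measurePreserving_snd (μ := ρ₁) (ν := ρ₂)
  have t₁ : Integrable (fun u : Z × Z => K u.1 u.1) _ := m₁.integrable_comp_of_integrable hd₁
  have t₁₂ : Integrable (fun u : Z × Z => s * K u.1 u.2) _ := h₁₂.const_mul s
  have t₂₁ : Integrable (fun u : Z × Z => s * K u.2 u.1) _ := h₂₁.swap.const_mul s
  have t₂ : Integrable (fun u : Z × Z => s ^ 2 * K u.2 u.2) _ :=
    (m₂.integrable_comp_of_integrable hd₂).const_mul (s ^ 2)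
  have e₂₁ : ∫ u, K u.2 u.1 ∂ρ₁.prod ρ₂ = ∫ p, uncurry K p ∂ρ₂.prod ρ₁ :=
    integral_prod_swap (uncurry K)
  simp only [pairKernel]
  rw [integral_add ?_ t₂, integral_add ?_ t₂₁, integral_add t₁ t₁₂, integral_const_mul,
    integral_const_mul, integral_const_mul, m₁.integral_comp_of_aestronglyMeasurable hd₁.1,
    m₂.integral_comp_of_aestronglyMeasurable hd₂.1, e₂₁]
  exacts [rfl, t₁.add t₁₂, (t₁.add t₁₂).add t₂₁]

variable {L : Z → Z → ℝ} {x₀ : Z}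

theorem integrable_centeredKernel (h₁ : Integrable (fun x => L x x₀) ρ₁)
    (h₂ : Integrable (L x₀) ρ₂) (h : Integrable (uncurry L) (ρ₁.prod ρ₂)) :
    Integrable (uncurry (centeredKernel L x₀)) (ρ₁.prod ρ₂) :=
  (((measurePreserving_fst.integrable_comp_of_integrable h₁).add
    (measurePreserving_snd.integrable_comp_of_integrable h₂)).sub h).sub (integrable_const _)

theorem integral_centeredKernel (h₁ : Integrable (fun x => L x x₀) ρ₁)
    (h₂ : Integrable (L x₀) ρ₂) (h : Integrable (uncurry L) (ρ₁.prod ρ₂)) :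
    ∫ p, uncurry (centeredKernel L x₀) p ∂ρ₁.prod ρ₂ =
      ∫ x, L x x₀ ∂ρ₁ + ∫ y, L x₀ y ∂ρ₂ - ∫ p, uncurry L p ∂ρ₁.prod ρ₂ - L x₀ x₀ := by
  have m₁ := measurePreserving_fst (μ := ρ₁) (ν := ρ₂)
  have m₂ := measurePreserving_snd (μ := ρ₁) (ν := ρ₂)
  have t₁ : Integrable (fun p : Z × Z => L p.1 x₀) _ := m₁.integrable_comp_of_integrable h₁
  have t₂ : Integrable (fun p : Z × Z => L x₀ p.2) _ := m₂.integrable_comp_of_integrable h₂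
  have t : Integrable (fun p : Z × Z => L p.1 p.2) _ := h
  simp only [uncurry_def, centeredKernel]
  rw [integral_sub ?_ (integrable_const _), integral_sub ?_ t, integral_add t₁ t₂,
    m₁.integral_comp_of_aestronglyMeasurable h₁.1 (g := fun x => L x x₀),
    m₂.integral_comp_of_aestronglyMeasurable h₂.1, integral_const, probReal_univ, one_smul]
  exacts [t₁.add t₂, (t₁.add t₂).sub t]

end Integrals

namespace IsPosSemidefKernel

variable [MeasurableSpace Z] {K : Z → Z → ℝ}

theorem neg_integral_diag_le (n : ℕ) {ρ : Measure Z} [IsProbabilityMeasure ρ]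
    (hK : IsPosSemidefKernel K) (hint : Integrable (uncurry K) (ρ.prod ρ))
    (hdiag : Integrable (fun z => K z z) ρ) :
    -∫ z, K z z ∂ρ ≤ (2 ^ n - 1) * ∫ p, uncurry K p ∂ρ.prod ρ := by
  induction n generalizing Z with
  | zero => simpa using integral_nonneg hK.diag_nonneg
  | succ n ih =>
    have h := ih (hK.pairKernel 1) (integrable_pairKernel 1 hint hint hint hint)
      (integrable_pairKernel_diag 1 hdiag hdiag hint hint)
    rw [integral_pairKernel 1 hint hint hint hint,
      integral_pairKernel_diag 1 hdiag hdiag hint hint] at h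
    rw [pow_succ]
    linarith

theorem integral_prod_self_nonneg {ρ : Measure Z} [IsProbabilityMeasure ρ]
    (hK : IsPosSemidefKernel K) (hint : Integrable (uncurry K) (ρ.prod ρ))
    (hdiag : Integrable (fun z => K z z) ρ) :
    0 ≤ ∫ p, uncurry K p ∂ρ.prod ρ := by
  by_contra! hneg
  obtain ⟨n, hn⟩ :=
    pow_unbounded_of_one_lt ((∫ z, K z z ∂ρ) / -(∫ p, uncurry K p ∂ρ.prod ρ) + 1) one_lt_two
  have h := hK.neg_integral_diag_le n hint hdiag
  rw [div_add_one (by linarith), div_lt_iff₀ (by linarith)] at hn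
  nlinarith

theorem integrable_indicator_sublevel_diag (hK : IsPosSemidefKernel K)
    (hdiag : Measurable fun z => K z z) (M : ℝ) (ρ : Measure Z) [IsFiniteMeasure ρ] :
    Integrable (fun z => ({z | K z z ≤ M} ×ˢ {z | K z z ≤ M}).indicator (uncurry K) (z, z)) ρ := by
  have hS : MeasurableSet {z | K z z ≤ M} := measurableSet_le hdiag measurable_const
  have heq : (fun z => ({z | K z z ≤ M} ×ˢ {z | K z z ≤ M}).indicator (uncurry K) (z, z)) =
      {z | K z z ≤ M}.indicator fun z => K z z := by
    ext z
    by_cases hz : K z z ≤ M <;> simp [hz]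
  rw [heq]
  refine .of_bound (hdiag.indicator hS).aestronglyMeasurable |M| (ae_of_all _ fun z => ?_)
  by_cases hz : z ∈ {z | K z z ≤ M}
  · rw [Set.indicator_of_mem hz, Real.norm_of_nonneg (hK.diag_nonneg z)]
    exact hz.trans (le_abs_self M)
  · simp [hz]

variable {μ ν : Measure Z} [IsProbabilityMeasure μ] [IsProbabilityMeasure ν]

theorem integral_cross_le_of_integrable_diag (hK : IsPosSemidefKernel K)
    (hμμ : Integrable (uncurry K) (μ.prod μ)) (hμν : Integrable (uncurry K) (μ.prod ν))
    (hνμ : Integrable (uncurry K) (ν.prod μ)) (hνν : Integrable (uncurry K) (ν.prod ν))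
    (hdμ : Integrable (fun z => K z z) μ) (hdν : Integrable (fun z => K z z) ν) :
    ∫ p, uncurry K p ∂μ.prod ν + ∫ p, uncurry K p ∂ν.prod μ ≤
      ∫ p, uncurry K p ∂μ.prod μ + ∫ p, uncurry K p ∂ν.prod ν := by
  have h := (hK.pairKernel (-1)).integral_prod_self_nonneg
    (integrable_pairKernel (-1) hμμ hμν hνμ hνν)
    (integrable_pairKernel_diag (-1) hdμ hdν hμν hνμ)
  rw [integral_pairKernel (-1) hμμ hμν hνμ hνν] at h
  linarith

theorem integral_cross_le (hK : IsPosSemidefKernel K) (hdiag : Measurable fun z => K z z)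
    (hμμ : Integrable (uncurry K) (μ.prod μ)) (hμν : Integrable (uncurry K) (μ.prod ν))
    (hνμ : Integrable (uncurry K) (ν.prod μ)) (hνν : Integrable (uncurry K) (ν.prod ν)) :
    ∫ p, uncurry K p ∂μ.prod ν + ∫ p, uncurry K p ∂ν.prod μ ≤
      ∫ p, uncurry K p ∂μ.prod μ + ∫ p, uncurry K p ∂ν.prod ν := by
  set S : ℕ → Set Z := fun M => {z | K z z ≤ M}
  have hS₁ (M : ℕ) : MeasurableSet (S M) := measurableSet_le hdiag measurable_const
  have hS (M : ℕ) : MeasurableSet (S M ×ˢ S M) := (hS₁ M).prod (hS₁ M)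
  have hS_mono : Monotone fun M => S M ×ˢ S M := fun M N hMN =>
    have h : S M ⊆ S N := fun z (hz : K z z ≤ M) =>
      show K z z ≤ N from hz.trans (Nat.cast_le.2 hMN)
    Set.prod_mono h h
  have hS_union : ⋃ M, S M ×ˢ S M = Set.univ := by
    refine Set.eq_univ_of_forall fun p => Set.mem_iUnion.2 ?_
    obtain ⟨M, hM⟩ := exists_nat_ge (max (K p.1 p.1) (K p.2 p.2))
    exact ⟨M, (le_max_left _ _).trans hM, (le_max_right _ _).trans hM⟩
  have tendsto {ρ₁ ρ₂ : Measure Z} (h : Integrable (uncurry K) (ρ₁.prod ρ₂)) :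
      Tendsto (fun M => ∫ p in S M ×ˢ S M, uncurry K p ∂ρ₁.prod ρ₂) atTop
        (𝓝 (∫ p, uncurry K p ∂ρ₁.prod ρ₂)) := by
    simpa [hS_union] using tendsto_setIntegral_of_monotone hS hS_mono (hS_union ▸ h.integrableOn)
  have truncated (M : ℕ) :
      ∫ p in S M ×ˢ S M, uncurry K p ∂μ.prod ν + ∫ p in S M ×ˢ S M, uncurry K p ∂ν.prod μ ≤
        ∫ p in S M ×ˢ S M, uncurry K p ∂μ.prod μ + ∫ p in S M ×ˢ S M, uncurry K p ∂ν.prod ν := by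
    simp only [← integral_indicator (hS M)]
    exact (hK.indicator_prod (S M)).integral_cross_le_of_integrable_diag
      (hμμ.indicator (hS M)) (hμν.indicator (hS M)) (hνμ.indicator (hS M))
      (hνν.indicator (hS M)) (hK.integrable_indicator_sublevel_diag hdiag M μ)
      (hK.integrable_indicator_sublevel_diag hdiag M ν)
  exact le_of_tendsto_of_tendsto' ((tendsto hμν).add (tendsto hνμ))
    ((tendsto hμμ).add (tendsto hνν)) truncated

end IsPosSemidefKernel

end

/-- If `L` is a real continuous symmetric negative definite kernel on a metric
space `X`, then for all probability measures `μ`, `ν` for which the double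
integrals exist, `2∫∫ L dμ dν − ∫∫ L dμ dμ − ∫∫ L dν dν ≥ 0`. -/
theorem ndist_nonneg_of_neg_def {X : Type*} [MetricSpace X] [MeasurableSpace X]
    [BorelSpace X] (L : X → X → ℝ)
    (hcont : Continuous fun p : X × X => L p.1 p.2)
    (hsymm : ∀ x y, L x y = L y x)
    (hneg : ∀ (n : ℕ) (c : Fin n → ℂ) (x : Fin n → X), (∑ i, c i) = 0 →
      ∑ i, ∑ j, (L (x i) (x j) : ℂ) * c i * (starRingEnd ℂ) (c j) ≤ 0)
    (μ ν : Measure X) [IsProbabilityMeasure μ] [IsProbabilityMeasure ν]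
    (hμν : Integrable (fun p : X × X => L p.1 p.2) (μ.prod ν))
    (hμμ : Integrable (fun p : X × X => L p.1 p.2) (μ.prod μ))
    (hνν : Integrable (fun p : X × X => L p.1 p.2) (ν.prod ν)) :
    0 ≤ 2 * (∫ p, L p.1 p.2 ∂μ.prod ν) - (∫ p, L p.1 p.2 ∂μ.prod μ)
        - (∫ p, L p.1 p.2 ∂ν.prod ν) := by
  obtain ⟨x₀, hμ₀, hν₀⟩ : ∃ x₀, Integrable (L x₀) μ ∧ Integrable (L x₀) ν :=
    (hμμ.prod_right_ae.and hμν.prod_right_ae).exists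
  have hL_comm : (fun x => L x x₀) = L x₀ := funext fun x => hsymm x x₀
  have hμ₀' : Integrable (fun x => L x x₀) μ := hL_comm ▸ hμ₀
  have hν₀' : Integrable (fun x => L x x₀) ν := hL_comm ▸ hν₀
  have hL_swap : uncurry L ∘ Prod.swap = uncurry L := funext fun p => hsymm p.2 p.1
  have hνμ : Integrable (uncurry L) (ν.prod μ) := hL_swap ▸ hμν.swap
  have hdiag : Measurable fun x => centeredKernel L x₀ x x := by
    unfold centeredKernel
    fun_prop
  have hφ := (isCondNegSemidefKernel_of_complex hneg).isPosSemidefKernel_centeredKernel x₀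
  have key := hφ.integral_cross_le hdiag (integrable_centeredKernel hμ₀' hμ₀ hμμ)
    (integrable_centeredKernel hμ₀' hν₀ hμν) (integrable_centeredKernel hν₀' hμ₀ hνμ)
    (integrable_centeredKernel hν₀' hν₀ hνν)
  rw [integral_centeredKernel hμ₀' hμ₀ hμμ, integral_centeredKernel hμ₀' hν₀ hμν,
    integral_centeredKernel hν₀' hμ₀ hνμ, integral_centeredKernel hν₀' hν₀ hνν] at key
  have hswap : ∫ p, uncurry L p ∂ν.prod μ = ∫ p, uncurry L p ∂μ.prod ν := by
    rw [← integral_prod_swap (uncurry L)]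
    exact congrArg (fun f => ∫ z, f z ∂μ.prod ν) hL_swap
  change 0 ≤ 2 * ∫ p, uncurry L p ∂μ.prod ν - ∫ p, uncurry L p ∂μ.prod μ -
    ∫ p, uncurry L p ∂ν.prod ν
  linarith
end

section
/- For 0 < r < 2 and x ∈ ℝ^n, ‖x‖^r = c_r ∫_{ℝ^n} (1 − cos⟨t,x⟩)/‖t‖^{n+r} dt, where c_r is a positive constant depending only on n and r (in particular the integral is finite and proportional to ‖x‖^r). -/
/-!
Near `0` the integrand is at most `‖x‖² ‖t‖^(2-n-r) / 2`, since `1 - cos θ ≤ θ² / 2`, and at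
infinity it is at most `2 ‖t‖^(-n-r)`; for `0 < r < 2` both bounds are integrable. The integral
depends only on `‖x‖`: the reflection exchanging `x` with another vector of the same norm preserves
Lebesgue measure, norms and inner products. The substitution `t ↦ a • t` shows that replacing `x`
by `a • x` multiplies the integral by `a ^ r`. Hence the integral is `c ‖x‖^r`, with `c` its value
at a unit vector `e`, and `c > 0` because the integrand is positive on the open slab
`0 < ⟪t, e⟫ < π`.
-/

open MeasureTheory Metric Set Module
open scoped RealInnerProductSpace

section Integrability

variable {E F : Type*} [NormedAddCommGroup E] [NormedSpace ℝ E] [FiniteDimensional ℝ E]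
  [MeasurableSpace E] [BorelSpace E] [NormedAddCommGroup F] {μ : Measure E} [μ.IsAddHaarMeasure]

theorem rpow_neg_le_mul_one_add_rpow_neg {R y β : ℝ} (hR : 0 < R) (hy : R ≤ y) (hβ : 0 ≤ β) :
    y ^ (-β) ≤ (1 + R⁻¹) ^ β * (1 + y) ^ (-β) := by
  have hy0 : 0 < y := hR.trans_le hy
  have h1y : 1 + y ≤ (1 + R⁻¹) * y := by
    rw [add_mul, one_mul, inv_mul_eq_div, add_comm]
    gcongr
    exact (one_le_div hR).2 hy
  calc y ^ (-β) = (1 + R⁻¹) ^ β * ((1 + R⁻¹) * y) ^ (-β) := by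
        rw [Real.mul_rpow (by positivity) hy0.le, ← mul_assoc, ← Real.rpow_add (by positivity),
          add_neg_cancel, Real.rpow_zero, one_mul]
    _ ≤ (1 + R⁻¹) ^ β * (1 + y) ^ (-β) := mul_le_mul_of_nonneg_left
        (Real.rpow_le_rpow_of_nonpos (by positivity) h1y (neg_nonpos.2 hβ)) (by positivity)

theorem MeasureTheory.integrableOn_compl_ball_of_norm_le_rpow {f : E → F} {C β R : ℝ}
    (hR : 0 < R) (hβ : finrank ℝ E < β)
    (h_decay : ∀ᵐ x ∂μ.restrict (ball 0 R)ᶜ, ‖f x‖ ≤ C * ‖x‖ ^ (-β))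
    (h_meas : AEStronglyMeasurable f μ) :
    IntegrableOn f (ball 0 R)ᶜ μ := by
  have hβ0 : 0 ≤ β := (Nat.cast_nonneg _).trans hβ.le
  refine Integrable.mono' ((integrable_one_add_norm hβ).const_mul (|C| * (1 + R⁻¹) ^ β)).restrict
    h_meas.restrict ?_
  filter_upwards [h_decay, ae_restrict_mem measurableSet_ball.compl] with x hfx hx
  have hRx : R ≤ ‖x‖ := by simpa using hx
  calc ‖f x‖ ≤ C * ‖x‖ ^ (-β) := hfx
    _ ≤ |C| * ‖x‖ ^ (-β) := by gcongr; exact le_abs_self C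
    _ ≤ |C| * (1 + R⁻¹) ^ β * (1 + ‖x‖) ^ (-β) := by
        rw [mul_assoc]
        gcongr
        exact rpow_neg_le_mul_one_add_rpow_neg hR hRx hβ0

end Integrability

section Kernel

variable {E : Type*} [NormedAddCommGroup E] [InnerProductSpace ℝ E]

theorem one_sub_cos_inner_div_nonneg (t x : E) (p : ℝ) :
    0 ≤ (1 - Real.cos ⟪t, x⟫) / ‖t‖ ^ p :=
  div_nonneg (sub_nonneg.2 (Real.cos_le_one _)) (by positivity)

theorem one_sub_cos_inner_div_le_sq (t x : E) (p : ℝ) :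
    (1 - Real.cos ⟪t, x⟫) / ‖t‖ ^ p ≤ ‖x‖ ^ 2 / 2 * ‖t‖ ^ (-(p - 2)) := by
  rcases eq_or_ne t 0 with rfl | ht
  · simp only [inner_zero_left, Real.cos_zero, sub_self, zero_div]
    positivity
  have htp : 0 < ‖t‖ ^ p := by positivity
  have hcos : 1 - Real.cos ⟪t, x⟫ ≤ (‖t‖ * ‖x‖) ^ 2 / 2 := by
    have hsq : ⟪t, x⟫ ^ 2 ≤ (‖t‖ * ‖x‖) ^ 2 := by
      rw [← sq_abs]
      exact pow_le_pow_left₀ (abs_nonneg _) (abs_real_inner_le_norm t x) 2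
    linarith [Real.one_sub_sq_div_two_le_cos (x := ⟪t, x⟫)]
  rw [div_le_iff₀ htp, mul_assoc, ← Real.rpow_add (norm_pos_iff.2 ht), neg_sub, sub_add_cancel,
    Real.rpow_two]
  linarith [show (‖t‖ * ‖x‖) ^ 2 / 2 = ‖x‖ ^ 2 / 2 * ‖t‖ ^ 2 by ring]

theorem one_sub_cos_inner_div_le_two (t x : E) (p : ℝ) :
    (1 - Real.cos ⟪t, x⟫) / ‖t‖ ^ p ≤ 2 * ‖t‖ ^ (-p) := by
  rw [Real.rpow_neg (norm_nonneg t), ← div_eq_mul_inv]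
  gcongr
  linarith [Real.neg_one_le_cos ⟪t, x⟫]

end Kernel

section Integral

variable {E : Type*} [NormedAddCommGroup E] [InnerProductSpace ℝ E] [MeasurableSpace E]
  {μ : Measure E}

theorem integral_one_sub_cos_inner_div_norm_rpow_pos [μ.IsOpenPosMeasure] {x : E} (hx : x ≠ 0)
    {p : ℝ} (hint : Integrable (fun t : E => (1 - Real.cos ⟪t, x⟫) / ‖t‖ ^ p) μ) :
    0 < ∫ t, (1 - Real.cos ⟪t, x⟫) / ‖t‖ ^ p ∂μ := by
  rw [integral_pos_iff_support_of_nonneg (fun t => one_sub_cos_inner_div_nonneg t x p) hint]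
  set V : Set E := (fun t => ⟪t, x⟫) ⁻¹' Ioo 0 Real.pi
  have hV_open : IsOpen V := isOpen_Ioo.preimage (by fun_prop)
  have hV_nonempty : V.Nonempty := by
    refine ⟨(‖x‖ ^ 2)⁻¹ • x, ?_⟩
    have : ⟪(‖x‖ ^ 2)⁻¹ • x, x⟫ = 1 := by
      rw [real_inner_smul_left, real_inner_self_eq_norm_sq, inv_mul_cancel₀ (by positivity)]
    simp only [V, mem_preimage, this, mem_Ioo]
    exact ⟨one_pos, by linarith [Real.pi_gt_three]⟩
  have hV_support : V ⊆ Function.support (fun t => (1 - Real.cos ⟪t, x⟫) / ‖t‖ ^ p) := by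
    rintro t ⟨h0, hπ⟩
    have ht : t ≠ 0 := by rintro rfl; simp at h0
    have hcos : Real.cos ⟪t, x⟫ < 1 := by
      simpa using Real.cos_lt_cos_of_nonneg_of_le_pi le_rfl hπ.le h0
    exact (div_pos (sub_pos.2 hcos) (by positivity)).ne'
  exact (hV_open.measure_pos μ hV_nonempty).trans_le (measure_mono hV_support)

variable [FiniteDimensional ℝ E] [BorelSpace E] [μ.IsAddHaarMeasure]

theorem integrable_one_sub_cos_inner_div_norm_rpow [Nontrivial E] (x : E) {p : ℝ}
    (hp_gt : finrank ℝ E < p) (hp_lt : p < finrank ℝ E + 2) :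
    Integrable (fun t : E => (1 - Real.cos ⟪t, x⟫) / ‖t‖ ^ p) μ := by
  have h_meas : AEStronglyMeasurable (fun t : E => (1 - Real.cos ⟪t, x⟫) / ‖t‖ ^ p) μ :=
    Measurable.aestronglyMeasurable (by fun_prop)
  have h_norm (t : E) : ‖(1 - Real.cos ⟪t, x⟫) / ‖t‖ ^ p‖ = (1 - Real.cos ⟪t, x⟫) / ‖t‖ ^ p :=
    Real.norm_of_nonneg (one_sub_cos_inner_div_nonneg t x p)
  rw [← integrableOn_univ, ← union_compl_self (ball (0 : E) 1)]
  refine IntegrableOn.union ?_ ?_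
  · exact integrableOn_ball_of_norm_le_rpow finrank_pos (by linarith)
      (ae_of_all _ fun t => (h_norm t).trans_le (one_sub_cos_inner_div_le_sq t x p)) h_meas
  · exact integrableOn_compl_ball_of_norm_le_rpow one_pos hp_gt
      (ae_of_all _ fun t => (h_norm t).trans_le (one_sub_cos_inner_div_le_two t x p)) h_meas

theorem integral_one_sub_cos_inner_smul_div_norm_rpow (x : E) {a : ℝ} (ha : 0 < a) (r : ℝ) :
    ∫ t, (1 - Real.cos ⟪t, a • x⟫) / ‖t‖ ^ (finrank ℝ E + r) ∂μ
      = a ^ r * ∫ t, (1 - Real.cos ⟪t, x⟫) / ‖t‖ ^ (finrank ℝ E + r) ∂μ := by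
  set p : ℝ := finrank ℝ E + r
  have hpoint (t : E) : (1 - Real.cos ⟪t, a • x⟫) / ‖t‖ ^ p
      = a ^ p * ((1 - Real.cos ⟪a • t, x⟫) / ‖a • t‖ ^ p) := by
    rw [real_inner_smul_right, ← real_inner_smul_left, norm_smul, Real.norm_of_nonneg ha.le,
      Real.mul_rpow ha.le (norm_nonneg t)]
    field_simp
  have hpow : a ^ p = a ^ finrank ℝ E * a ^ r := by
    rw [Real.rpow_add ha, Real.rpow_natCast]
  calc ∫ t, (1 - Real.cos ⟪t, a • x⟫) / ‖t‖ ^ p ∂μ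
      = a ^ p * ∫ t, (1 - Real.cos ⟪a • t, x⟫) / ‖a • t‖ ^ p ∂μ := by
        simp_rw [hpoint]
        exact integral_const_mul _ _
    _ = a ^ p * (a ^ finrank ℝ E)⁻¹ * ∫ t, (1 - Real.cos ⟪t, x⟫) / ‖t‖ ^ p ∂μ := by
        rw [Measure.integral_comp_smul_of_nonneg μ (fun t => (1 - Real.cos ⟪t, x⟫) / ‖t‖ ^ p) a
          (hR := ha.le), smul_eq_mul, mul_assoc]
    _ = a ^ r * ∫ t, (1 - Real.cos ⟪t, x⟫) / ‖t‖ ^ p ∂μ := by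
        rw [hpow]
        field_simp

end Integral

section Volume

variable {E : Type*} [NormedAddCommGroup E] [InnerProductSpace ℝ E] [FiniteDimensional ℝ E]
  [MeasurableSpace E] [BorelSpace E]

theorem integral_inner_norm_eq_of_norm_eq {F : Type*} [NormedAddCommGroup F] [NormedSpace ℝ F]
    (g : ℝ → ℝ → F) {x y : E} (h : ‖x‖ = ‖y‖) :
    ∫ t, g ⟪t, x⟫ ‖t‖ = ∫ t, g ⟪t, y⟫ ‖t‖ := by
  set R := (ℝ ∙ (y - x))ᗮ.reflection
  have hRy : R y = x := Submodule.reflection_sub h.symm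
  have hRx : ∀ t, ⟪R t, x⟫ = ⟪t, y⟫ := fun t => by
    rw [← hRy, LinearIsometryEquiv.inner_map_map]
  rw [← integral_comp R]
  simp only [hRx, LinearIsometryEquiv.norm_map]

theorem exists_integral_one_sub_cos_inner_div_norm_rpow_eq {r : ℝ} (hr0 : 0 < r) (hr2 : r < 2) :
    ∃ c : ℝ, 0 < c ∧ ∀ x : E,
      Integrable (fun t : E => (1 - Real.cos ⟪t, x⟫) / ‖t‖ ^ (finrank ℝ E + r)) ∧
      ∫ t : E, (1 - Real.cos ⟪t, x⟫) / ‖t‖ ^ (finrank ℝ E + r) = c * ‖x‖ ^ r := by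
  set p : ℝ := finrank ℝ E + r
  rcases subsingleton_or_nontrivial E with hE | hE
  · refine ⟨1, one_pos, fun x => ?_⟩
    rw [Subsingleton.elim x 0]
    simp [Real.zero_rpow hr0.ne']
  obtain ⟨e, he⟩ := exists_norm_eq E zero_le_one
  have hint (x : E) : Integrable (fun t : E => (1 - Real.cos ⟪t, x⟫) / ‖t‖ ^ p) :=
    integrable_one_sub_cos_inner_div_norm_rpow x (by linarith) (by linarith)
  have he0 : e ≠ 0 := norm_ne_zero_iff.1 (he ▸ one_ne_zero)
  refine ⟨_, integral_one_sub_cos_inner_div_norm_rpow_pos he0 (hint e), fun x => ⟨hint x, ?_⟩⟩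
  rcases eq_or_ne x 0 with rfl | hx
  · simp [Real.zero_rpow hr0.ne']
  have hxe : ‖x‖ = ‖‖x‖ • e‖ := by rw [norm_smul, he, norm_norm, mul_one]
  rw [integral_inner_norm_eq_of_norm_eq (fun s u => (1 - Real.cos s) / u ^ p) hxe,
    integral_one_sub_cos_inner_smul_div_norm_rpow e (norm_pos_iff.2 hx), mul_comm]

end Volume

/-- For `0 < r < 2` there is a constant `c = c(n,r) > 0` such that for all
`x ∈ ℝ^n` the integrand `t ↦ (1 − cos⟨t,x⟩)/‖t‖^{n+r}` is integrable and
`∫_{ℝ^n} (1 − cos⟨t,x⟩)/‖t‖^{n+r} dt = c ‖x‖^r`. -/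
theorem integral_one_sub_cos_inner (n : ℕ) (r : ℝ) (hr0 : 0 < r) (hr2 : r < 2) :
    ∃ c : ℝ, 0 < c ∧ ∀ x : EuclideanSpace ℝ (Fin n),
      Integrable (fun t : EuclideanSpace ℝ (Fin n) =>
        (1 - Real.cos (inner ℝ t x : ℝ)) / ‖t‖ ^ ((n : ℝ) + r)) ∧
      (∫ t : EuclideanSpace ℝ (Fin n),
          (1 - Real.cos (inner ℝ t x : ℝ)) / ‖t‖ ^ ((n : ℝ) + r)) = c * ‖x‖ ^ r := by
  simpa only [finrank_euclideanSpace_fin] using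
    exists_integral_one_sub_cos_inner_div_norm_rpow_eq (E := EuclideanSpace ℝ (Fin n)) hr0 hr2
end

section
/- Let X, Y be random compact convex sets in ℝ^d (random elements of the space of nonempty compact convex sets with the Borel σ-algebra from the Hausdorff metric) and let (u_n)_{n∈ℕ} be a dense sequence in S^{d-1}. If for every finite index set I ⊆ ℕ the random vectors (h(X,u_i))_{i∈I} and (h(Y,u_i))_{i∈I} have the same distribution, then X and Y have the same distribution. -/
/-! The values `φ(K) = (h(K, uₙ))ₙ` determine the Hausdorff distance:
`d_H(K, L) = supₙ |h(K, uₙ) - h(L, uₙ)|`, by separating a point from the nearest point of a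
convex set and by continuity of `h(K, ·)` on the sphere. So every closed Hausdorff ball is a
`φ`-preimage, and since the space of compact convex sets is separable, its Borel σ-algebra is
pulled back by `φ`; a law on it is therefore determined by its image under `φ`. That image is the
law of a random sequence, which is determined by its finite-dimensional distributions. -/

open MeasureTheory

/-- The space of nonempty compact convex subsets of ℝ^d with the Hausdorff metric
(inherited from `NonemptyCompacts`). -/
abbrev ConvexCompacts (d : ℕ) :=
  {K : TopologicalSpace.NonemptyCompacts (EuclideanSpace ℝ (Fin d)) //
    Convex ℝ (K : Set (EuclideanSpace ℝ (Fin d)))}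

/-- The support function of a compact convex set evaluated at `u`. -/
noncomputable def suppFn {d : ℕ} (K : ConvexCompacts d)
    (u : EuclideanSpace ℝ (Fin d)) : ℝ :=
  sSup ((fun y => (inner ℝ u y : ℝ)) '' (K : Set (EuclideanSpace ℝ (Fin d))))

open Metric Set
open scoped Pointwise

section SupportFunction

variable {d : ℕ}

local notation "E" => EuclideanSpace ℝ (Fin d)

lemma inner_le_suppFn (K : ConvexCompacts d) (v : E) {x : E} (hx : x ∈ (K : Set E)) :
    inner ℝ v x ≤ suppFn K v :=
  le_csSup (K.1.isCompact.image (continuous_const.inner continuous_id)).bddAbove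
    (mem_image_of_mem _ hx)

lemma suppFn_le {K : ConvexCompacts d} {v : E} {c : ℝ}
    (h : ∀ x ∈ (K : Set E), inner ℝ v x ≤ c) : suppFn K v ≤ c :=
  csSup_le (K.1.nonempty.image _) (forall_mem_image.2 h)

lemma suppFn_smul (K : ConvexCompacts d) (v : E) {c : ℝ} (hc : 0 ≤ c) :
    suppFn K (c • v) = c * suppFn K v := by
  have : (fun y => inner ℝ (c • v) y) '' (K : Set E) =
      c • (fun y => inner ℝ v y) '' (K : Set E) := by
    rw [← Set.image_smul, Set.image_image]
    simp only [real_inner_smul_left, smul_eq_mul]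
  rw [suppFn, this, Real.sSup_smul_of_nonneg hc, smul_eq_mul, suppFn]

lemma suppFn_le_add_norm_mul_dist (K L : ConvexCompacts d) (v : E) :
    suppFn K v ≤ suppFn L v + ‖v‖ * dist K L := by
  refine suppFn_le fun x hx => ?_
  obtain ⟨y, hy, hxy⟩ := L.1.isCompact.exists_infDist_eq_dist L.1.nonempty x
  have hdist : dist x y ≤ dist K L := by
    rw [← hxy, Subtype.dist_eq, NonemptyCompacts.dist_eq]
    exact infDist_le_hausdorffDist_of_mem hx <| hausdorffEDist_ne_top_of_nonempty_of_bounded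
      K.1.nonempty L.1.nonempty K.1.isCompact.isBounded L.1.isCompact.isBounded
  calc inner ℝ v x = inner ℝ v y + inner ℝ v (x - y) := by rw [inner_sub_right]; ring
    _ ≤ suppFn L v + ‖v‖ * ‖x - y‖ :=
      add_le_add (inner_le_suppFn L v hy) (real_inner_le_norm v (x - y))
    _ ≤ suppFn L v + ‖v‖ * dist K L := by
      rw [← dist_eq_norm]; gcongr

lemma lipschitzWith_suppFn_left (v : E) :
    LipschitzWith ‖v‖₊ (fun K : ConvexCompacts d => suppFn K v) :=
  LipschitzWith.of_le_add_mul _ fun K L => suppFn_le_add_norm_mul_dist K L v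

lemma abs_suppFn_sub_le_dist (K L : ConvexCompacts d) {v : E} (hv : ‖v‖ = 1) :
    |suppFn K v - suppFn L v| ≤ dist K L := by
  simpa only [Real.dist_eq, coe_nnnorm, hv, one_mul] using
    (lipschitzWith_suppFn_left v).dist_le_mul K L

lemma continuous_suppFn (K : ConvexCompacts d) : Continuous (suppFn K) := by
  obtain ⟨R, hR⟩ := K.1.isCompact.isBounded.exists_norm_le
  refine (LipschitzWith.of_le_add_mul' R fun v w => suppFn_le fun x hx => ?_).continuous
  calc inner ℝ v x = inner ℝ w x + inner ℝ (v - w) x := by rw [inner_sub_left]; ring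
    _ ≤ suppFn K w + ‖v - w‖ * ‖x‖ :=
      add_le_add (inner_le_suppFn K w hx) (real_inner_le_norm (v - w) x)
    _ ≤ suppFn K w + R * dist v w := by
      rw [dist_eq_norm, mul_comm R]; gcongr; exact hR x hx

/-- With `y` the nearest point of `L` to `x` and `w = x - y`, we have `h(L, w) = ⟪w, y⟫` and
`h(K, w) ≥ ⟪w, y⟫ + ‖w‖²`, while the hypothesis scaled by `‖w‖` gives `h(K, w) ≤ h(L, w) + r‖w‖`. -/
lemma infDist_le_of_forall_suppFn_le {K L : ConvexCompacts d} {r : ℝ} (hr : 0 ≤ r)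
    (h : ∀ v : E, ‖v‖ = 1 → suppFn K v ≤ suppFn L v + r) {x : E} (hx : x ∈ (K : Set E)) :
    infDist x (L : Set E) ≤ r := by
  obtain ⟨y, hy, hmin⟩ :=
    exists_norm_eq_iInf_of_complete_convex L.1.nonempty L.1.isCompact.isComplete L.2 x
  have hproj := (norm_eq_iInf_iff_real_inner_le_zero L.2 hy).1 hmin
  refine (infDist_le_dist_of_mem hy).trans ?_
  rw [dist_eq_norm]
  set w := x - y
  rcases (norm_nonneg w).eq_or_lt with hw | hw
  · rwa [← hw]
  have hL : suppFn L w ≤ inner ℝ w y := suppFn_le fun z hz => by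
    have := hproj z hz
    rw [inner_sub_right] at this
    linarith
  have hK : suppFn K w ≤ suppFn L w + r * ‖w‖ := by
    have hw' : w = ‖w‖ • (‖w‖⁻¹ • w) := by rw [smul_smul, mul_inv_cancel₀ hw.ne', one_smul]
    have hunit : ‖‖w‖⁻¹ • w‖ = 1 := by
      rw [norm_smul, norm_inv, norm_norm, inv_mul_cancel₀ hw.ne']
    rw [hw', suppFn_smul _ _ hw.le, suppFn_smul _ _ hw.le, norm_smul, norm_norm, hunit]
    nlinarith [h _ hunit]
  have hsq : ‖w‖ * ‖w‖ ≤ r * ‖w‖ := by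
    have := inner_le_suppFn K w hx
    rw [← real_inner_self_eq_norm_mul_norm, inner_sub_right]
    linarith
  exact le_of_mul_le_mul_right hsq hw

lemma dist_le_of_forall_abs_suppFn_sub_le {K L : ConvexCompacts d} {r : ℝ} (hr : 0 ≤ r)
    (h : ∀ v : E, ‖v‖ = 1 → |suppFn K v - suppFn L v| ≤ r) : dist K L ≤ r := by
  rw [Subtype.dist_eq, NonemptyCompacts.dist_eq]
  refine hausdorffDist_le_of_infDist hr (fun x hx => ?_) (fun x hx => ?_)
  · exact infDist_le_of_forall_suppFn_le hr
      (fun v hv => by linarith [(abs_le.1 (h v hv)).2]) hx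
  · exact infDist_le_of_forall_suppFn_le hr
      (fun v hv => by linarith [(abs_le.1 (h v hv)).1]) hx

lemma dist_le_iff_forall_abs_suppFn_sub_le {u : ℕ → E} (hu : ∀ n, u n ∈ sphere (0 : E) 1)
    (hdense : sphere (0 : E) 1 ⊆ closure (range u)) {K L : ConvexCompacts d} {r : ℝ} :
    dist K L ≤ r ↔ ∀ n, |suppFn K (u n) - suppFn L (u n)| ≤ r := by
  refine ⟨fun hKL n => (abs_suppFn_sub_le_dist K L (by simpa using hu n)).trans hKL,
    fun h => dist_le_of_forall_abs_suppFn_sub_le ((abs_nonneg _).trans (h 0)) fun v hv => ?_⟩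
  have hclosed : IsClosed {w : E | |suppFn K w - suppFn L w| ≤ r} :=
    isClosed_le ((continuous_suppFn K).sub (continuous_suppFn L)).abs continuous_const
  exact hclosed.closure_subset_iff.2 (range_subset_iff.2 h) (hdense (by simpa using hv))

end SupportFunction

lemma borel_le_of_measurableSet_closedBall {γ : Type*} [PseudoMetricSpace γ]
    [SecondCountableTopology γ] {m : MeasurableSpace γ}
    (h : ∀ (x : γ) (r : ℝ), MeasurableSet[m] (closedBall x r)) : borel γ ≤ m := by
  refine MeasurableSpace.generateFrom_le fun U (hU : IsOpen U) => ?_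
  choose! ε hε hεU using fun x (hx : x ∈ U) =>
    nhds_basis_closedBall.mem_iff.1 (hU.mem_nhds hx)
  obtain ⟨t, htU, htc, hcover⟩ := TopologicalSpace.countable_cover_nhdsWithin fun x hx =>
    mem_nhdsWithin_of_mem_nhds (closedBall_mem_nhds x (hε x hx))
  rw [hcover.antisymm (iUnion₂_subset fun x hx => hεU x (htU hx))]
  exact .biUnion htc fun x _ => h x _

lemma MeasureTheory.Measure.ext_of_map_eq_of_le_comap {α β : Type*} {m : MeasurableSpace α}
    {mβ : MeasurableSpace β} {f : α → β} (hf : Measurable f) (hle : m ≤ mβ.comap f)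
    {μ ν : Measure α} (h : μ.map f = ν.map f) : μ = ν := by
  ext s hs
  obtain ⟨t, ht, rfl⟩ := hle s hs
  rw [← Measure.map_apply hf ht, ← Measure.map_apply hf ht, h]

lemma MeasureTheory.isProjectiveLimit_map {Ω ι : Type*} {α : ι → Type*} [MeasurableSpace Ω]
    [∀ i, MeasurableSpace (α i)] {P : Measure Ω} {Z : Ω → ∀ i, α i} (hZ : Measurable Z) :
    IsProjectiveLimit (P.map Z) (fun I => P.map fun ω => I.restrict (Z ω)) := fun I =>
  Measure.map_map (Finset.measurable_restrict I) hZ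

lemma borel_le_comap_suppFn {d : ℕ} {u : ℕ → EuclideanSpace ℝ (Fin d)}
    (hu : ∀ n, u n ∈ sphere (0 : EuclideanSpace ℝ (Fin d)) 1)
    (hdense : sphere (0 : EuclideanSpace ℝ (Fin d)) 1 ⊆ closure (range u)) :
    borel (ConvexCompacts d) ≤
      MeasurableSpace.comap (fun K n => suppFn K (u n)) MeasurableSpace.pi := by
  refine borel_le_of_measurableSet_closedBall fun L r =>
    ⟨⋂ n, {p : ℕ → ℝ | |p n - suppFn L (u n)| ≤ r}, ?_, ?_⟩
  · exact .iInter fun n => measurableSet_le (by fun_prop) measurable_const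
  · ext K
    simp only [mem_preimage, mem_iInter, mem_ofPred_eq, mem_closedBall]
    exact (dist_le_iff_forall_abs_suppFn_sub_le hu hdense).symm

/-- If `X`, `Y` are random compact convex sets in ℝ^d and `(uₙ)` is a dense
sequence in the unit sphere such that for every finite index set `I` the random
vectors `(h(X,uᵢ))_{i∈I}` and `(h(Y,uᵢ))_{i∈I}` are equal in distribution, then
`X` and `Y` are equal in distribution. -/
theorem eq_distribution_of_fdds {d : ℕ} {Ω : Type*} [MeasurableSpace Ω]
    [MeasurableSpace (ConvexCompacts d)] [BorelSpace (ConvexCompacts d)]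
    (P : Measure Ω) [IsProbabilityMeasure P]
    (X Y : Ω → ConvexCompacts d) (hX : Measurable X) (hY : Measurable Y)
    (u : ℕ → EuclideanSpace ℝ (Fin d))
    (hu : ∀ n, u n ∈ Metric.sphere (0 : EuclideanSpace ℝ (Fin d)) 1)
    (hdense : Metric.sphere (0 : EuclideanSpace ℝ (Fin d)) 1 ⊆
      closure (Set.range u))
    (hfdd : ∀ I : Finset ℕ,
      P.map (fun ω => fun i : I => suppFn (X ω) (u i)) =
      P.map (fun ω => fun i : I => suppFn (Y ω) (u i))) :
    P.map X = P.map Y := by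
  set φ : ConvexCompacts d → ℕ → ℝ := fun K n => suppFn K (u n)
  have hφ : Measurable φ :=
    measurable_pi_lambda _ fun n => (lipschitzWith_suppFn_left (u n)).continuous.measurable
  have hφXY : P.map (φ ∘ X) = P.map (φ ∘ Y) :=
    (isProjectiveLimit_map (hφ.comp hX)).unique fun I =>
      (isProjectiveLimit_map (hφ.comp hY) I).trans (hfdd I).symm
  refine Measure.ext_of_map_eq_of_le_comap hφ
    (BorelSpace.measurable_eq.trans_le (borel_le_comap_suppFn hu hdense)) ?_
  rwa [Measure.map_map hφ hX, Measure.map_map hφ hY]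
end
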